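/- arXiv:1308.6778 — 2 statements merged into one kernel-verified Lean document; each statement's English description precedes it below -/
import Mathlib

section
/- Any finite set of n (possibly open, half-open, or closed) intervals on the real line can be replaced by n closed intervals with integer endpoints in {1,...,n} preserving the pairwise intersection relation: two new intervals intersect if and only if the original corresponding intervals intersect. -/
/-!
Order the intervals by their left ends and let `s i` be the rank of `I i` in this order and
`t i` the largest rank of an interval meeting `I i`. Meeting intervals then get overlapping
ranges `[s i, t i]`. Disjoint intervals are separated, say `I i` lies entirely left of `I j`;
every interval meeting `I i` then starts strictly before `I j`, so `t i < s j`.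
-/

open Finset

lemma Set.OrdConnected.forall_lt_or_forall_lt_of_not_nonempty_inter {α : Type*} [LinearOrder α]
    {A B : Set α} (hA : A.OrdConnected) (hB : B.OrdConnected) (hAB : ¬ (A ∩ B).Nonempty) :
    (∀ x ∈ A, ∀ y ∈ B, x < y) ∨ (∀ y ∈ B, ∀ x ∈ A, y < x) := by
  by_contra! ⟨⟨x, hx, y, hy, hyx⟩, ⟨y', hy', x', hx', hxy'⟩⟩
  rcases le_or_gt x' y with h | h
  · exact hAB ⟨y, hA.out hx' hx ⟨h, hyx⟩, hy⟩
  · exact hAB ⟨x', hx', hB.out hy hy' ⟨h.le, hxy'⟩⟩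

lemma upperClosure_lt_upperClosure_of_forall_lt {α : Type*} [LinearOrder α] {s t : Set α}
    {x : α} (hx : x ∈ s) (ht : ∀ y ∈ t, x < y) : upperClosure s < upperClosure t := by
  refine lt_of_not_ge fun hle => ?_
  obtain ⟨y, hy, hyx⟩ := hle (subset_upperClosure hx)
  exact (ht y hy).not_ge hyx

section rank

variable {ι α : Type*} [Fintype ι] [Preorder α] (f : ι → α)

open Classical in
noncomputable def rankBelow (i : ι) : ℕ := #{j | f j < f i}

variable {f}

lemma rankBelow_lt_rankBelow {i j : ι} (h : f i < f j) : rankBelow f i < rankBelow f j := by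
  classical
  refine card_lt_card <| (ssubset_iff_of_subset fun k hk => ?_).2 ⟨i, ?_, ?_⟩
  · simp only [mem_filter_univ] at hk ⊢
    exact hk.trans h
  · simpa using h
  · simp

lemma rankBelow_lt_card (i : ι) : rankBelow f i < Fintype.card ι := by
  classical
  exact card_lt_univ_of_notMem (x := i) (by simp)

end rank

section intervalRepresentation

variable {ι α : Type*} [Fintype ι] [LinearOrder α] (I : ι → Set α)

/-- Comparing upper closures orders sets by their left ends, an end that belongs to the set
counting as smaller than the same end left out. -/
noncomputable def leftRank (i : ι) : ℕ := rankBelow (fun j => upperClosure (I j)) i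

open Classical in
noncomputable def reachRank (i : ι) : ℕ :=
  ({j | (I i ∩ I j).Nonempty} : Finset ι).sup (leftRank I)

variable {I}

lemma leftRank_le_reachRank {i j : ι} (h : (I i ∩ I j).Nonempty) :
    leftRank I j ≤ reachRank I i := by
  classical
  exact le_sup (f := leftRank I) (by simpa using h)

lemma reachRank_lt_card (i : ι) : reachRank I i < Fintype.card ι := by
  classical
  have : 0 < Fintype.card ι := Fintype.card_pos_iff.2 ⟨i⟩
  exact (Finset.sup_lt_iff this).2 fun j _ => rankBelow_lt_card j

lemma reachRank_lt_leftRank {i j : ι} (hi : (I i).Nonempty)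
    (hij : ∀ x ∈ I i, ∀ y ∈ I j, x < y) : reachRank I i < leftRank I j := by
  classical
  obtain ⟨x, hx⟩ := hi
  refine (Finset.sup_lt_iff ?_).2 fun k hk => ?_
  · exact (Nat.zero_le _).trans_lt <| rankBelow_lt_rankBelow <|
      upperClosure_lt_upperClosure_of_forall_lt hx (hij x hx)
  · obtain ⟨y, hyi, hyk⟩ := (mem_filter_univ _).1 hk
    exact rankBelow_lt_rankBelow <| upperClosure_lt_upperClosure_of_forall_lt hyk (hij y hyi)

lemma inter_nonempty_iff_leftRank_le_reachRank (hI : ∀ i, (I i).OrdConnected)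
    (hne : ∀ i, (I i).Nonempty) {i j : ι} :
    (I i ∩ I j).Nonempty ↔ leftRank I i ≤ reachRank I j ∧ leftRank I j ≤ reachRank I i := by
  refine ⟨fun h => ⟨leftRank_le_reachRank (Set.inter_comm _ _ ▸ h), leftRank_le_reachRank h⟩,
    fun ⟨hij, hji⟩ => ?_⟩
  by_contra hdisj
  rcases (hI i).forall_lt_or_forall_lt_of_not_nonempty_inter (hI j) hdisj with h | h
  · exact (reachRank_lt_leftRank (hne i) h).not_ge hji
  · exact (reachRank_lt_leftRank (hne j) h).not_ge hij

end intervalRepresentation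

/-- Any `n` intervals on the real line can be replaced by `n` nonempty closed intervals with
integer endpoints in `{1,…,n}` preserving the pairwise intersection relation. -/
theorem stmt_1 (n : ℕ) (I : Fin n → Set ℝ)
    (hI : ∀ i, (I i).OrdConnected) (hne : ∀ i, (I i).Nonempty) :
    ∃ s t : Fin n → ℤ,
      (∀ i, 1 ≤ s i ∧ s i ≤ t i ∧ t i ≤ (n : ℤ)) ∧
      ∀ i j : Fin n,
        ((Set.Icc (s i) (t i) : Set ℤ) ∩ Set.Icc (s j) (t j)).Nonempty ↔
        (I i ∩ I j).Nonempty := by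
  have hself (i : Fin n) : leftRank I i ≤ reachRank I i :=
    leftRank_le_reachRank (by simpa using hne i)
  have hcard (i : Fin n) : reachRank I i < n := by simpa using reachRank_lt_card (I := I) i
  refine ⟨fun i => leftRank I i + 1, fun i => reachRank I i + 1, fun i => ?_, fun i j => ?_⟩
  · have := hself i
    have := hcard i
    dsimp only
    omega
  · rw [inter_nonempty_iff_leftRank_le_reachRank hI hne, Set.Icc_inter_Icc, Set.nonempty_Icc,
      max_le_iff, le_min_iff, le_min_iff]
    have := hself i
    have := hself j
    dsimp only
    omega
end

section
/- Let x : {0,...,U+1} → {0,1} with x(0) = x(U+1) = 0 and x not identically zero, and let b, e : {1,...,U} → {0,1} each have exactly one index equal to 1. If for all i in {1,...,U}: x(i-1) + b(i) ≥ x(i) and x(i) ≤ x(i+1) + e(i), then the set {i : x(i) = 1} is a nonempty interval [s,t] of consecutive integers with b(s) = 1 and e(t) = 1. -/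
/-!
Let `t` be the last one of `x`. Since `x (t + 1) = 0`, the constraint `x t ≤ x (t + 1) + e t`
forces `e t = 1`. Dually, every maximal run of ones of `x` starts at a rise `x (k - 1) = 0`,
`x k = 1`, which forces `b k = 1`. As `b` takes the value `1` only once, all ones of `x` lie in the
single run ending at `t`.
-/

theorem Nat.exists_run_ending_at {p : ℕ → Prop} (h0 : ¬p 0) {i : ℕ} (hi : p i) :
    ∃ m < i, ¬p m ∧ ∀ j, m < j → j ≤ i → p j := by
  classical
  have hm : ¬p (Nat.findGreatest (¬p ·) i) :=
    Nat.findGreatest_spec (P := (¬p ·)) (Nat.zero_le i) h0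
  refine ⟨Nat.findGreatest (¬p ·) i, ?_, hm, fun j hmj hji => ?_⟩
  · exact (Nat.findGreatest_le i).lt_of_ne fun h => hm (h.symm ▸ hi)
  · by_contra hj
    exact hmj.not_ge (Nat.le_findGreatest hji hj)

theorem exists_last_one_of_end_constraint {U : ℕ} {x e : ℕ → ℕ}
    (hx01 : ∀ i ≤ U + 1, x i ≤ 1) (hx0 : x 0 = 0) (hxU : x (U + 1) = 0)
    (hne : ∃ i ≤ U + 1, x i = 1)
    (he01 : ∀ i, 1 ≤ i → i ≤ U → e i ≤ 1)
    (hend : ∀ i, 1 ≤ i → i ≤ U → x i ≤ x (i + 1) + e i) :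
    ∃ t, 1 ≤ t ∧ t ≤ U ∧ x t = 1 ∧ e t = 1 ∧
      ∀ j ≤ U + 1, x j = 1 → j ≤ t := by
  classical
  obtain ⟨i₀, hi₀, hxi₀⟩ := hne
  set t := Nat.findGreatest (x · = 1) (U + 1)
  have hxt : x t = 1 := Nat.findGreatest_spec (P := (x · = 1)) hi₀ hxi₀
  have htmax : ∀ j ≤ U + 1, x j = 1 → j ≤ t := fun _ hj =>
    Nat.le_findGreatest (P := (x · = 1)) hj
  have htle : t ≤ U + 1 := Nat.findGreatest_le (U + 1)
  clear_value t
  obtain ⟨ht₁, htU⟩ : 1 ≤ t ∧ t ≤ U := by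
    have : t ≠ 0 := by rintro rfl; omega
    have : t ≠ U + 1 := by rintro rfl; omega
    omega
  have hxt₁ : x (t + 1) ≠ 1 := fun h => by have := htmax (t + 1) (by omega) h; omega
  have := hx01 (t + 1) (by omega)
  have := hend t ht₁ htU
  have := he01 t ht₁ htU
  exact ⟨t, ht₁, htU, hxt, by omega, htmax⟩

theorem stmt_4_general (U : ℕ) (x b e : ℕ → ℕ)
    (hx01 : ∀ i ≤ U + 1, x i ≤ 1) (hx0 : x 0 = 0) (hxU : x (U + 1) = 0)
    (hne : ∃ i ≤ U + 1, x i = 1)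
    (hb01 : ∀ i, 1 ≤ i → i ≤ U → b i ≤ 1) (he01 : ∀ i, 1 ≤ i → i ≤ U → e i ≤ 1)
    (hb : ∃! i, (1 ≤ i ∧ i ≤ U) ∧ b i = 1)
    (hstart : ∀ i, 1 ≤ i → i ≤ U → x i ≤ x (i - 1) + b i)
    (hend : ∀ i, 1 ≤ i → i ≤ U → x i ≤ x (i + 1) + e i) :
    ∃ s t, 1 ≤ s ∧ s ≤ t ∧ t ≤ U ∧ b s = 1 ∧ e t = 1 ∧
      ∀ i ≤ U + 1, (x i = 1 ↔ s ≤ i ∧ i ≤ t) := by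
  have rise : ∀ m < U, x m ≠ 1 → x (m + 1) = 1 →
      (1 ≤ m + 1 ∧ m + 1 ≤ U) ∧ b (m + 1) = 1 := by
    intro m hmU hxm hxm₁
    have hle := hstart (m + 1) (by omega) hmU
    rw [add_tsub_cancel_right] at hle
    have := hb01 (m + 1) (by omega) hmU
    have := hx01 m (by omega)
    omega
  obtain ⟨t, ht₁, htU, hxt, het, htmax⟩ :=
    exists_last_one_of_end_constraint hx01 hx0 hxU hne he01 hend
  obtain ⟨m, hmt, hxm, hrun⟩ := Nat.exists_run_ending_at (p := (x · = 1)) (by omega) hxt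
  have hbs := rise m (by omega) hxm (hrun _ (lt_add_one m) hmt)
  refine ⟨m + 1, t, by omega, hmt, htU, hbs.2, het,
    fun i hi => ⟨fun hxi => ?_, fun ⟨h₁, h₂⟩ => hrun i h₁ h₂⟩⟩
  have hit := htmax i hi hxi
  obtain ⟨k, hki, hxk, hrunk⟩ := Nat.exists_run_ending_at (p := (x · = 1)) (by omega) hxi
  have := hb.unique (rise k (by omega) hxk (hrunk _ (lt_add_one k) hki)) hbs
  omega

/-- If the one-dimensional box constraints are satisfied, the ones of `x` form a nonempty
interval `[s,t] ⊆ {1,…,U}` with `b s = 1` and `e t = 1`. -/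
theorem stmt_4 (U : ℕ) (x b e : ℕ → ℕ)
    (hx01 : ∀ i ≤ U + 1, x i ≤ 1) (hx0 : x 0 = 0) (hxU : x (U + 1) = 0)
    (hne : ∃ i ≤ U + 1, x i = 1)
    (hb01 : ∀ i, 1 ≤ i → i ≤ U → b i ≤ 1) (he01 : ∀ i, 1 ≤ i → i ≤ U → e i ≤ 1)
    (hb : ∃! i, (1 ≤ i ∧ i ≤ U) ∧ b i = 1)
    (he : ∃! i, (1 ≤ i ∧ i ≤ U) ∧ e i = 1)
    (hstart : ∀ i, 1 ≤ i → i ≤ U → x i ≤ x (i - 1) + b i)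
    (hend : ∀ i, 1 ≤ i → i ≤ U → x i ≤ x (i + 1) + e i) :
    ∃ s t, 1 ≤ s ∧ s ≤ t ∧ t ≤ U ∧ b s = 1 ∧ e t = 1 ∧
      ∀ i ≤ U + 1, (x i = 1 ↔ s ≤ i ∧ i ≤ t) :=
  stmt_4_general U x b e hx01 hx0 hxU hne hb01 he01 hb hstart hend
end
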